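/- Let f₁,…,fₙ : ℝ^d → ℝ be differentiable, convex and L-smooth (L > 0), let f = (1/n)·Σᵢ₌₁ⁿ fᵢ, and fix points x, w ∈ ℝ^d. Let 1 ≤ K ≤ d and let S₁,…,Sₙ be independent uniformly distributed random K-element subsets of Fin d; for each i let Qᵢ apply the RandK compressor with subset Sᵢ to a vector, i.e. (Qᵢ(v))_t = (d/K)·v_t if t ∈ Sᵢ and 0 otherwise. Then E[‖(1/n)·Σᵢ₌₁ⁿ Qᵢ(∇fᵢ(x) − ∇fᵢ(w)) + ∇f(w) − ∇f(x)‖²] ≤ 2L·(d/(nK) + 1)·(f(w) − f(x) − ⟨∇f(x), w − x⟩). In particular, the efficient Lipschitz constant of DHPL-Katyusha with RandK compression is at most (d/(nK) + 1)·L. -/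

import Mathlib

/-!
With `gᵢ = ∇fᵢ(x) - ∇fᵢ(w)` and `∇f = (1/n) ∑ᵢ ∇fᵢ`, the error vector is `(1/n) ∑ᵢ (Qᵢ gᵢ - gᵢ)`.
A uniform `K`-subset contains a fixed coordinate with probability `K/d`, so each coordinate of
`Qᵢ gᵢ` is an unbiased estimate of that of `gᵢ` with variance `(d/K - 1) gᵢₜ²`; by independence
the variances add up, and the expected squared error is `(d/K - 1)/n² · ∑ᵢ ‖gᵢ‖²`. For convex
`L`-smooth `fᵢ`, `‖gᵢ‖² ≤ 2L·Dᵢ` with `Dᵢ` the Bregman divergence of `fᵢ` between `x` and `w`,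
and the `Dᵢ` average to the Bregman divergence of `f`.
-/

open MeasureTheory ProbabilityTheory
open scoped RealInnerProductSpace ENNReal

/-- Discrete σ-algebra on finsets, used to speak of a random subset. -/
instance finsetMeasurableSpace (α : Type*) : MeasurableSpace (Finset α) := ⊤

/-- The RandK compression operator with coordinate set `S`: it keeps the coordinates in `S`
rescaled by `d/K` and zeros out the others. -/
noncomputable def randKvec {d : ℕ} (K : ℕ) (S : Finset (Fin d))
    (x : EuclideanSpace ℝ (Fin d)) : EuclideanSpace ℝ (Fin d) :=
  WithLp.toLp 2 (fun t => if t ∈ S then ((d : ℝ) / (K : ℝ)) * x t else 0)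

section Bregman

open Finset

variable {E : Type*} [NormedAddCommGroup E] [InnerProductSpace ℝ E] [CompleteSpace E]

noncomputable def bregmanDiv (f : E → ℝ) (x w : E) : ℝ := f w - f x - ⟪gradient f x, w - x⟫

lemma bregmanDiv_nonneg {f : E → ℝ} (hf : ConvexOn ℝ Set.univ f) {x : E}
    (hx : DifferentiableAt ℝ f x) (w : E) : 0 ≤ bregmanDiv f x w := by
  have hline : HasDerivAt (fun s : ℝ => f (AffineMap.lineMap x w s)) (fderiv ℝ f x (w - x)) 0 :=
    hx.hasFDerivAt.comp_hasDerivAt_of_eq 0 AffineMap.hasDerivAt_lineMap (by simp)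
  have hslope := (hf.comp_affineMap (AffineMap.lineMap x w)).le_slope_of_hasDerivAt
    (Set.mem_univ 0) (Set.mem_univ 1) zero_lt_one hline
  simp only [slope_def_field, Function.comp_apply, AffineMap.lineMap_apply_zero,
    AffineMap.lineMap_apply_one, sub_zero, div_one] at hslope
  rw [bregmanDiv, inner_gradient_left]
  linarith

lemma sq_norm_gradient_sub_le_bregmanDiv {f : E → ℝ} {L : ℝ} (hL : 0 < L)
    (hf : ConvexOn ℝ Set.univ f) {x w : E} (hx : DifferentiableAt ℝ f x)
    (hsmooth : ∀ v, f v ≤ f w + ⟪gradient f w, v - w⟫ + L / 2 * ‖v - w‖ ^ 2) :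
    ‖gradient f x - gradient f w‖ ^ 2 ≤ 2 * L * bregmanDiv f x w := by
  -- compare the quadratic upper bound at `w`, taken at its minimiser `z`, with the tangent at `x`
  set h := gradient f w - gradient f x
  set z := w - L⁻¹ • h
  have hup := hsmooth z
  have hlow := bregmanDiv_nonneg hf hx z
  have hzw : ⟪gradient f w, z - w⟫ = -L⁻¹ * ⟪gradient f w, h⟫ := by
    simp [z, inner_smul_right]
  have hzx : ⟪gradient f x, z - x⟫ = ⟪gradient f x, w - x⟫ - L⁻¹ * ⟪gradient f x, h⟫ := by
    simp [z, sub_right_comm w _ x, inner_sub_right, inner_smul_right]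
  have hnorm : ‖z - w‖ = L⁻¹ * ‖h‖ := by simp [z, norm_smul, hL.le]
  have hh : ⟪gradient f w, h⟫ - ⟪gradient f x, h⟫ = ‖h‖ ^ 2 := by
    rw [← inner_sub_left, real_inner_self_eq_norm_sq]
  rw [bregmanDiv, hzx] at hlow
  rw [hzw, hnorm] at hup
  rw [norm_sub_rev, bregmanDiv]
  have key : ‖h‖ ^ 2
      = 2 * L * (L⁻¹ * (⟪gradient f w, h⟫ - ⟪gradient f x, h⟫) - L / 2 * (L⁻¹ * ‖h‖) ^ 2) := by
    rw [hh]
    field_simp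
    ring
  rw [key]
  exact mul_le_mul_of_nonneg_left (by linarith) (by positivity)

lemma hasGradientAt_const_mul_sum {ι : Type*} (s : Finset ι) {f : ι → E → ℝ} {x : E}
    (hf : ∀ i ∈ s, DifferentiableAt ℝ (f i) x) (c : ℝ) :
    HasGradientAt (fun v => c * ∑ i ∈ s, f i v) (c • ∑ i ∈ s, gradient (f i) x) x := by
  rw [hasGradientAt_iff_hasFDerivAt, map_smul, map_sum]
  simp only [toDual_gradient]
  exact (HasFDerivAt.fun_sum fun i hi => (hf i hi).hasFDerivAt).const_mul c

lemma bregmanDiv_const_mul_sum {ι : Type*} (s : Finset ι) {f : ι → E → ℝ} {x : E}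
    (hf : ∀ i ∈ s, DifferentiableAt ℝ (f i) x) (c : ℝ) (w : E) :
    bregmanDiv (fun v => c * ∑ i ∈ s, f i v) x w = c * ∑ i ∈ s, bregmanDiv (f i) x w := by
  simp only [bregmanDiv, (hasGradientAt_const_mul_sum s hf c).gradient, real_inner_smul_left,
    sum_inner, sum_sub_distrib]
  ring

end Bregman

section RandK

open Finset

lemma card_filter_card_eq_and_mem {α : Type*} [Fintype α] [DecidableEq α] {K : ℕ} (hK : 1 ≤ K)
    (t : α) : #{U : Finset α | t ∈ U ∧ #U = K} = (Fintype.card α - 1).choose (K - 1) := by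
  rw [← card_univ, ← card_erase_of_mem (mem_univ t), ← card_powersetCard]
  refine card_nbij' (·.erase t) (insert t) ?_ ?_ ?_ ?_
  · intro U hU
    simp only [coe_filter, mem_univ, true_and, Set.mem_ofPred_eq] at hU
    simp [hU.2, card_erase_of_mem hU.1, erase_subset_erase]
  · intro U hU
    simp only [mem_coe, mem_powersetCard, subset_erase] at hU
    simp only [coe_filter, mem_univ, true_and, Set.mem_ofPred_eq, mem_insert, true_or,
      card_insert_of_notMem hU.1.2, hU.2]
    omega
  · intro U hU
    simp only [coe_filter, mem_univ, true_and, Set.mem_ofPred_eq] at hU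
    exact insert_erase hU.1
  · intro U hU
    simp only [mem_coe, mem_powersetCard, subset_erase] at hU
    exact erase_insert hU.1.2

variable {Ω : Type*} [MeasurableSpace Ω] {μ : Measure Ω}

@[simp]
lemma randKvec_apply {d : ℕ} (K : ℕ) (S : Finset (Fin d)) (v : EuclideanSpace ℝ (Fin d))
    (t : Fin d) : randKvec K S v t = if t ∈ S then (d / K : ℝ) * v t else 0 := rfl

lemma memLp_comp_of_discrete {β : Type*} [MeasurableSpace β] [DiscreteMeasurableSpace β]
    [Finite β] [IsFiniteMeasure μ] {T : Ω → β} (hT : Measurable T) (φ : β → ℝ) {p : ℝ≥0∞} :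
    MemLp (fun a => φ (T a)) p μ :=
  (memLp_map_measure_iff Measurable.of_discrete.aestronglyMeasurable hT.aemeasurable).1
    MemLp.of_discrete

lemma integral_sq_sum_sub_integral_eq_sum_variance [IsFiniteMeasure μ] {ι : Type*} [Fintype ι]
    {X : ι → Ω → ℝ} (hX : ∀ i, MemLp (X i) 2 μ)
    (hindep : Pairwise fun i j => IndepFun (X i) (X j) μ) :
    ∫ a, (∑ i, X i a - ∑ i, μ[X i]) ^ 2 ∂μ = ∑ i, Var[X i; μ] := by
  have hsum : (fun a => ∑ i, X i a) = ∑ i, X i := by ext; simp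
  rw [← IndepFun.variance_sum (fun i _ => hX i) (fun i _ j _ hij => hindep hij),
    variance_eq_integral (memLp_finsetSum' _ fun i _ => hX i).aemeasurable, ← hsum,
    integral_finsetSum _ fun i _ => (hX i).integrable one_le_two]

structure IsUniformSubset {d : ℕ} (K : ℕ) (T : Ω → Finset (Fin d)) (μ : Measure Ω) : Prop where
  measurable : Measurable T
  card_eq : ∀ a, #(T a) = K
  measure_eq : ∀ U : Finset (Fin d), #U = K → μ {a | T a = U} = (d.choose K : ℝ≥0∞)⁻¹

namespace IsUniformSubset

variable {d K : ℕ} {T : Ω → Finset (Fin d)}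

lemma measureReal_eq (hT : IsUniformSubset K T μ) (U : Finset (Fin d)) :
    μ.real {a | T a = U} = if #U = K then ((d.choose K : ℝ))⁻¹ else 0 := by
  split_ifs with hU
  · simp [measureReal_def, hT.measure_eq U hU]
  · have : {a | T a = U} = ∅ := Set.eq_empty_of_forall_notMem fun a ha => hU (ha ▸ hT.card_eq a)
    simp [this]

lemma measureReal_mem [IsFiniteMeasure μ] (hT : IsUniformSubset K T μ) (hK : 1 ≤ K)
    (hKd : K ≤ d) (t : Fin d) : μ.real {a | t ∈ T a} = K / d := by
  classical
  have hpre : {a | t ∈ T a} = T ⁻¹' ↑({U | t ∈ U} : Finset (Finset (Fin d))) := by ext; simp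
  rw [hpre, ← map_measureReal_apply hT.measurable MeasurableSet.of_discrete,
    ← sum_measureReal_singleton]
  simp_rw [map_measureReal_apply hT.measurable MeasurableSet.of_discrete]
  simp only [Set.preimage, Set.mem_singleton_iff, hT.measureReal_eq]
  rw [sum_ite, sum_const_zero, add_zero, sum_const, nsmul_eq_mul, filter_filter,
    card_filter_card_eq_and_mem hK, Fintype.card_fin]
  have hd : d - 1 + 1 = d := by omega
  have hchoose : (d : ℝ) * (d - 1).choose (K - 1) = d.choose K * K := by
    have := Nat.add_one_mul_choose_eq (d - 1) (K - 1)
    rw [hd, Nat.sub_add_cancel hK] at this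
    exact_mod_cast this
  have hC : (d.choose K : ℝ) ≠ 0 := by positivity [Nat.choose_pos hKd]
  have hd' : (d : ℝ) ≠ 0 := by positivity [hK.trans hKd]
  field_simp
  linear_combination hchoose

lemma integral_ite_mem [IsFiniteMeasure μ] (hT : IsUniformSubset K T μ) (hK : 1 ≤ K)
    (hKd : K ≤ d) (t : Fin d) (c : ℝ) : ∫ a, (if t ∈ T a then c else 0) ∂μ = K / d * c := by
  have hmeas : MeasurableSet {a | t ∈ T a} :=
    hT.measurable (MeasurableSet.of_discrete (s := {U | t ∈ U}))
  rw [← hT.measureReal_mem hK hKd t, ← smul_eq_mul, ← integral_indicator_const c hmeas]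
  simp only [Set.indicator_apply, Set.mem_ofPred_eq]

lemma integral_randKvec_apply [IsFiniteMeasure μ] (hT : IsUniformSubset K T μ) (hK : 1 ≤ K)
    (hKd : K ≤ d) (v : EuclideanSpace ℝ (Fin d)) (t : Fin d) :
    ∫ a, randKvec K (T a) v t ∂μ = v t := by
  have hK' : (K : ℝ) ≠ 0 := by positivity
  have hd' : (d : ℝ) ≠ 0 := by positivity [hK.trans hKd]
  simp only [randKvec_apply, hT.integral_ite_mem hK hKd]
  field_simp

lemma variance_randKvec_apply [IsProbabilityMeasure μ] (hT : IsUniformSubset K T μ) (hK : 1 ≤ K)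
    (hKd : K ≤ d) (v : EuclideanSpace ℝ (Fin d)) (t : Fin d) :
    Var[fun a => randKvec K (T a) v t; μ] = (d / K - 1) * v t ^ 2 := by
  have hK' : (K : ℝ) ≠ 0 := by positivity
  have hd' : (d : ℝ) ≠ 0 := by positivity [hK.trans hKd]
  rw [variance_eq_sub (memLp_comp_of_discrete hT.measurable fun U => randKvec K U v t),
    hT.integral_randKvec_apply hK hKd]
  have hsq : (fun a => randKvec K (T a) v t) ^ 2
      = fun a => if t ∈ T a then (d / K * v t) ^ 2 else 0 := by
    ext a
    simp only [Pi.pow_apply, randKvec_apply]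
    split_ifs <;> simp
  rw [hsq, hT.integral_ite_mem hK hKd]
  field_simp

end IsUniformSubset

lemma integral_norm_sq_sum_randKvec_sub [IsProbabilityMeasure μ] {ι : Type*} [Fintype ι]
    {d K : ℕ} (hK : 1 ≤ K) (hKd : K ≤ d) {S : ι → Ω → Finset (Fin d)}
    (hS : ∀ i, IsUniformSubset K (S i) μ) (hindep : iIndepFun S μ)
    (g : ι → EuclideanSpace ℝ (Fin d)) :
    ∫ a, ‖∑ i, (randKvec K (S i a) (g i) - g i)‖ ^ 2 ∂μ = (d / K - 1) * ∑ i, ‖g i‖ ^ 2 := by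
  have hcoord : ∀ a, ‖∑ i, (randKvec K (S i a) (g i) - g i)‖ ^ 2
      = ∑ t, (∑ i, randKvec K (S i a) (g i) t - ∑ i, g i t) ^ 2 := by
    intro a
    simp [EuclideanSpace.norm_sq_eq, sum_sub_distrib]
  have hint : ∀ t,
      Integrable (fun a => (∑ i, randKvec K (S i a) (g i) t - ∑ i, g i t) ^ 2) μ :=
    fun t => memLp_one_iff_integrable.1 <| memLp_comp_of_discrete (measurable_pi_lambda _
      fun i => (hS i).measurable) (fun V => (∑ i, randKvec K (V i) (g i) t - ∑ i, g i t) ^ 2)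
  have hvar : ∀ t, ∫ a, (∑ i, randKvec K (S i a) (g i) t - ∑ i, g i t) ^ 2 ∂μ
      = ∑ i, (d / K - 1) * g i t ^ 2 := by
    intro t
    have hsum := integral_sq_sum_sub_integral_eq_sum_variance
      (fun i => memLp_comp_of_discrete (hS i).measurable fun U => randKvec K U (g i) t)
      fun i j hij => (hindep.indepFun hij).comp
        (Measurable.of_discrete (f := fun U => randKvec K U (g i) t))
        (Measurable.of_discrete (f := fun U => randKvec K U (g j) t))
    simpa only [(hS _).integral_randKvec_apply hK hKd, (hS _).variance_randKvec_apply hK hKd]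
      using hsum
  simp_rw [hcoord, integral_finsetSum _ fun t _ => hint t, hvar, EuclideanSpace.norm_sq_eq,
    Real.norm_eq_abs, sq_abs, mul_sum]
  exact sum_comm

end RandK

theorem dhpl_katyusha_randK_efficient_lipschitz_general
    {d n K : ℕ} (hK : 1 ≤ K) (hKd : K ≤ d)
    {L : ℝ} (hL : 0 < L)
    (f : Fin n → EuclideanSpace ℝ (Fin d) → ℝ)
    (hdiff : ∀ i, Differentiable ℝ (f i))
    (hconv : ∀ i, ConvexOn ℝ Set.univ (f i))
    (hsmooth : ∀ i, ∀ u v : EuclideanSpace ℝ (Fin d),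
      f i v ≤ f i u + ⟪gradient (f i) u, v - u⟫ + L / 2 * ‖v - u‖ ^ 2)
    (F : EuclideanSpace ℝ (Fin d) → ℝ)
    (hF : F = fun u => (1 / (n : ℝ)) * ∑ i, f i u)
    (x w : EuclideanSpace ℝ (Fin d))
    {Ω : Type*} [MeasureSpace Ω] [IsProbabilityMeasure (ℙ : Measure Ω)]
    (S : Fin n → Ω → Finset (Fin d))
    (hSmeas : ∀ i, Measurable (S i))
    (hScard : ∀ i a, (S i a).card = K)
    (hSunif : ∀ i, ∀ T : Finset (Fin d), T.card = K →
      ℙ {a | S i a = T} = ((d.choose K : ℝ≥0∞))⁻¹)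
    (hSindep : iIndepFun S ℙ) :
    ∫ a, ‖(1 / (n : ℝ)) •
        ∑ i, randKvec K (S i a) (gradient (f i) x - gradient (f i) w)
        + gradient F w - gradient F x‖ ^ 2 ∂ℙ
      ≤ 2 * L * ((d : ℝ) / ((n : ℝ) * (K : ℝ)) + 1)
          * (F w - F x - ⟪gradient F x, w - x⟫) := by
  set g : Fin n → EuclideanSpace ℝ (Fin d) := fun i => gradient (f i) x - gradient (f i) w
  have hgradF : ∀ u, gradient F u = (1 / (n : ℝ)) • ∑ i, gradient (f i) u := fun u => by
    rw [hF]
    exact (hasGradientAt_const_mul_sum _ (fun i _ => (hdiff i).differentiableAt) _).gradient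
  have herror : ∀ a,
      (1 / (n : ℝ)) • ∑ i, randKvec K (S i a) (gradient (f i) x - gradient (f i) w)
        + gradient F w - gradient F x
      = (1 / (n : ℝ)) • ∑ i, (randKvec K (S i a) (g i) - g i) := fun a => by
    simp only [hgradF, Finset.sum_sub_distrib, smul_sub, g]
    abel
  have hbregF : F w - F x - ⟪gradient F x, w - x⟫ = 1 / n * ∑ i, bregmanDiv (f i) x w := by
    rw [← bregmanDiv, hF]
    exact bregmanDiv_const_mul_sum _ (fun i _ => (hdiff i).differentiableAt) _ w
  have hg : ∀ i, ‖g i‖ ^ 2 ≤ 2 * L * bregmanDiv (f i) x w := fun i =>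
    sq_norm_gradient_sub_le_bregmanDiv hL (hconv i) (hdiff i x) (hsmooth i w)
  have hB : 0 ≤ ∑ i, bregmanDiv (f i) x w :=
    Finset.sum_nonneg fun i _ => bregmanDiv_nonneg (hconv i) (hdiff i x) w
  have hdK : 0 ≤ (d : ℝ) / K - 1 := by
    rw [sub_nonneg, one_le_div (by positivity)]
    exact_mod_cast hKd
  simp_rw [herror, norm_smul, mul_pow, Real.norm_eq_abs, sq_abs]
  rw [integral_const_mul, integral_norm_sq_sum_randKvec_sub hK hKd
    (fun i => ⟨hSmeas i, hScard i, hSunif i⟩) hSindep, hbregF]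
  calc (1 / (n : ℝ)) ^ 2 * ((d / K - 1) * ∑ i, ‖g i‖ ^ 2)
      ≤ (1 / (n : ℝ)) ^ 2 * ((d / K - 1) * (2 * L * ∑ i, bregmanDiv (f i) x w)) := by
        gcongr
        rw [Finset.mul_sum]
        exact Finset.sum_le_sum fun i _ => hg i
    _ ≤ 2 * L * (d / (n * K) + 1) * (1 / n * ∑ i, bregmanDiv (f i) x w) := by
        rw [← sub_nonneg]
        have hgap : 2 * L * (d / (n * K) + 1) * (1 / n * ∑ i, bregmanDiv (f i) x w)
            - (1 / (n : ℝ)) ^ 2 * ((d / K - 1) * (2 * L * ∑ i, bregmanDiv (f i) x w))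
            = 2 * L * (1 / n) * (1 + 1 / n) * ∑ i, bregmanDiv (f i) x w := by ring
        rw [hgap]
        positivity

/-- **The efficient Lipschitz constant of DHPL-Katyusha with RandK compression is at most
`(d/(nK) + 1)·L`**: if `f₁, …, fₙ : ℝ^d → ℝ` are differentiable, convex and `L`-smooth,
`f = (1/n)·∑ᵢ fᵢ`, and `S₁, …, Sₙ` are independent uniformly distributed random `K`-element
subsets of `Fin d` (with `Qᵢ` the RandK compressor using `Sᵢ`), then
`E[‖(1/n)·∑ᵢ Qᵢ(∇fᵢ(x) − ∇fᵢ(w)) + ∇f(w) − ∇f(x)‖²]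
  ≤ 2L·(d/(nK) + 1)·(f(w) − f(x) − ⟨∇f(x), w − x⟩)`. -/
theorem dhpl_katyusha_randK_efficient_lipschitz
    {d n K : ℕ} (hn : 0 < n) (hK : 1 ≤ K) (hKd : K ≤ d)
    {L : ℝ} (hL : 0 < L)
    (f : Fin n → EuclideanSpace ℝ (Fin d) → ℝ)
    (hdiff : ∀ i, Differentiable ℝ (f i))
    (hconv : ∀ i, ConvexOn ℝ Set.univ (f i))
    (hsmooth : ∀ i, ∀ u v : EuclideanSpace ℝ (Fin d),
      f i v ≤ f i u + ⟪gradient (f i) u, v - u⟫ + L / 2 * ‖v - u‖ ^ 2)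
    (F : EuclideanSpace ℝ (Fin d) → ℝ)
    (hF : F = fun u => (1 / (n : ℝ)) * ∑ i, f i u)
    (x w : EuclideanSpace ℝ (Fin d))
    {Ω : Type*} [MeasureSpace Ω] [IsProbabilityMeasure (ℙ : Measure Ω)]
    (S : Fin n → Ω → Finset (Fin d))
    (hSmeas : ∀ i, Measurable (S i))
    (hScard : ∀ i a, (S i a).card = K)
    (hSunif : ∀ i, ∀ T : Finset (Fin d), T.card = K →
      ℙ {a | S i a = T} = ((d.choose K : ℝ≥0∞))⁻¹)
    (hSindep : iIndepFun S ℙ) :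
    ∫ a, ‖(1 / (n : ℝ)) •
        ∑ i, randKvec K (S i a) (gradient (f i) x - gradient (f i) w)
        + gradient F w - gradient F x‖ ^ 2 ∂ℙ
      ≤ 2 * L * ((d : ℝ) / ((n : ℝ) * (K : ℝ)) + 1)
          * (F w - F x - ⟪gradient F x, w - x⟫) :=
  dhpl_katyusha_randK_efficient_lipschitz_general hK hKd hL f hdiff hconv hsmooth F hF x w S hSmeas
    hScard hSunif hSindep
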